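/- arXiv:0711.3666 — 2 statements merged into one kernel-verified Lean document; each statement's English description precedes it below -/
import Mathlib

section
/- Let $t_0<t_1$, $A_1,A_2:[t_0,t_1]\to\mathbb{R}^{n\times n}$ continuous, and let $x:[t_0,t_1]\to\mathbb{R}^n$ be a $C^2$ solution of $x''+A_1(t)x'+A_2(t)x=0$ with $x(t_0)=x(t_1)=0$. Then for any $C^1$ symmetric matrix function $K^0(t)$, $\int_{t_0}^{t_1}\Big(\big|x'-\big(\tfrac12 A_1^\top - K^0\big)x\big|^2 + x\cdot N x\Big)\,dt = 0$, where $N := (K^0)' - \tfrac12(A_2+A_2^\top) - \big(\tfrac12 A_1 - K^0\big)\big(\tfrac12 A_1^\top - K^0\big)$. -/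
/-!
Along a solution, `d/dt (x·x' + x·K⁰x) = |x'|² - x·A₁x' - x·A₂x + 2x'·K⁰x + x·(K⁰)'x`, and by the
symmetry of `K⁰` this is exactly the integrand once the square `|x' - (½A₁ᵀ - K⁰)x|²` is completed.
The integral is therefore the difference of the boundary values of `x·x' + x·K⁰x`, which vanish
since `x(t₀) = x(t₁) = 0`.
-/

open Matrix Set Topology

section ContinuousOn

variable {X m ι R : Type*} [TopologicalSpace X] [TopologicalSpace R] {s : Set X}

theorem continuousOn_matrix {A : X → Matrix m ι R} (hA : ∀ i j, ContinuousOn (fun p => A p i j) s) :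
    ContinuousOn A s :=
  continuousOn_pi.2 fun i => continuousOn_pi.2 (hA i)

variable [Fintype ι] [NonUnitalNonAssocSemiring R] [ContinuousAdd R] [ContinuousMul R]

@[fun_prop]
theorem ContinuousOn.dotProduct {f g : X → ι → R} (hf : ContinuousOn f s) (hg : ContinuousOn g s) :
    ContinuousOn (fun p => f p ⬝ᵥ g p) s := by
  rw [continuousOn_iff_continuous_domRestrict] at *
  exact hf.dotProduct hg

@[fun_prop]
theorem ContinuousOn.matrix_mulVec {A : X → Matrix m ι R} {v : X → ι → R} (hA : ContinuousOn A s)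
    (hv : ContinuousOn v s) : ContinuousOn (fun p => A p *ᵥ v p) s := by
  rw [continuousOn_iff_continuous_domRestrict] at *
  exact hA.matrix_mulVec hv

end ContinuousOn

section Deriv

variable {𝕜 : Type*} [NontriviallyNormedField 𝕜] {ι m : Type*} [Fintype ι] {t : 𝕜}

theorem HasDerivAt.dotProduct {f g : 𝕜 → ι → 𝕜} {f' g' : ι → 𝕜} (hf : HasDerivAt f f' t)
    (hg : HasDerivAt g g' t) :
    HasDerivAt (fun s => f s ⬝ᵥ g s) (f' ⬝ᵥ g t + f t ⬝ᵥ g') t := by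
  simp only [_root_.dotProduct, ← Finset.sum_add_distrib]
  exact HasDerivAt.fun_sum fun i _ => (hasDerivAt_pi.1 hf i).fun_mul (hasDerivAt_pi.1 hg i)

theorem HasDerivAt.matrix_mulVec {A : 𝕜 → Matrix m ι 𝕜} {A' : Matrix m ι 𝕜} {v : 𝕜 → ι → 𝕜}
    {v' : ι → 𝕜} (hA : ∀ i j, HasDerivAt (fun s => A s i j) (A' i j) t) (hv : HasDerivAt v v' t) :
    HasDerivAt (fun s => A s *ᵥ v s) (A' *ᵥ v t + A t *ᵥ v') t :=
  hasDerivAt_pi.2 fun i => (hasDerivAt_pi.2 (hA i)).dotProduct hv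

theorem ContDiffOn.hasDerivAt_derivWithin {E : Type*} [NormedAddCommGroup E] [NormedSpace 𝕜 E]
    {f : 𝕜 → E} {s : Set 𝕜} (hf : ContDiffOn 𝕜 2 f s) (hs : s ∈ 𝓝 t) :
    HasDerivAt (derivWithin f s) (deriv (deriv f) t) t := by
  have hf' : ContDiffOn 𝕜 1 (deriv f) (interior s) :=
    (hf.mono interior_subset).deriv_of_isOpen isOpen_interior (by norm_num)
  have heq : derivWithin f s =ᶠ[𝓝 t] deriv f :=
    (eventually_mem_nhds_iff.2 hs).mono fun _ => derivWithin_of_mem_nhds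
  exact ((hf'.differentiableOn one_ne_zero).differentiableAt
    (isOpen_interior.mem_nhds (mem_interior_iff_mem_nhds.2 hs))).hasDerivAt.congr_of_eventuallyEq heq

end Deriv

section Integrand

variable {n : ℕ}

noncomputable def hartmanWintnerIntegrand (A₁ A₂ K K' : Matrix (Fin n) (Fin n) ℝ)
    (x y : Fin n → ℝ) : ℝ :=
  (∑ i, (y i - (((1 / 2 : ℝ) • A₁ᵀ - K) *ᵥ x) i) ^ 2)
    + x ⬝ᵥ ((K' - (1 / 2 : ℝ) • (A₂ + A₂ᵀ) - ((1 / 2 : ℝ) • A₁ - K) * ((1 / 2 : ℝ) • A₁ᵀ - K)) *ᵥ x)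

theorem hartmanWintnerIntegrand_eq {A₁ A₂ K K' : Matrix (Fin n) (Fin n) ℝ} (hK : Kᵀ = K)
    {x y z : Fin n → ℝ} (hz : z + A₁ *ᵥ y + A₂ *ᵥ x = 0) :
    hartmanWintnerIntegrand A₁ A₂ K K' x y
      = y ⬝ᵥ y + x ⬝ᵥ z + (y ⬝ᵥ (K *ᵥ x) + x ⬝ᵥ (K' *ᵥ x + K *ᵥ y)) := by
  unfold hartmanWintnerIntegrand
  set B := (1 / 2 : ℝ) • A₁ᵀ - K
  have hBt : (1 / 2 : ℝ) • A₁ - K = Bᵀ := by simp [B, hK]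
  have hsq : ∑ i, (y i - (B *ᵥ x) i) ^ 2 = (y - B *ᵥ x) ⬝ᵥ (y - B *ᵥ x) := by
    simp [dotProduct, sq]
  have hquad : x ⬝ᵥ ((Bᵀ * B) *ᵥ x) = (B *ᵥ x) ⬝ᵥ (B *ᵥ x) := by
    rw [← mulVec_mulVec, dotProduct_mulVec, vecMul_transpose]
  have hz' : z = -(A₁ *ᵥ y) - A₂ *ᵥ x := by linear_combination (norm := module) hz
  rw [hsq, hBt, sub_mulVec _ (Bᵀ * B), dotProduct_sub x, hquad, hz']
  simp only [B, sub_mulVec, add_mulVec, smul_mulVec, dotProduct_sub, sub_dotProduct,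
    dotProduct_add, dotProduct_neg, dotProduct_smul, smul_dotProduct, smul_eq_mul]
  rw [← dotProduct_transpose_mulVec A₁ y x, ← dotProduct_transpose_mulVec K y x, hK,
    dotProduct_comm (K *ᵥ x), dotProduct_comm (A₁ᵀ *ᵥ x), dotProduct_transpose_mulVec A₂ x x]
  ring

theorem ContinuousOn.hartmanWintnerIntegrand {X : Type*} [TopologicalSpace X] {s : Set X}
    {A₁ A₂ K K' : X → Matrix (Fin n) (Fin n) ℝ} {x y : X → Fin n → ℝ}
    (hA₁ : ContinuousOn A₁ s) (hA₂ : ContinuousOn A₂ s) (hK : ContinuousOn K s)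
    (hK' : ContinuousOn K' s) (hx : ContinuousOn x s) (hy : ContinuousOn y s) :
    ContinuousOn
      (fun p => _root_.hartmanWintnerIntegrand (A₁ p) (A₂ p) (K p) (K' p) (x p) (y p)) s := by
  unfold _root_.hartmanWintnerIntegrand
  fun_prop

end Integrand

/-- Key integral identity in the Hartman–Wintner uniqueness argument: if `x` is a `C²`
solution of `x'' + A₁x' + A₂x = 0` with `x(t₀)=x(t₁)=0`, then for any `C¹` symmetric `K⁰`,
`∫ (|x' - (½A₁ᵀ - K⁰)x|² + x·Nx) dt = 0` where
`N = (K⁰)' - ½(A₂+A₂ᵀ) - (½A₁-K⁰)(½A₁ᵀ-K⁰)`. -/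
theorem stmt_3 (n : ℕ) (t0 t1 : ℝ) (ht : t0 < t1)
    (A1 A2 : ℝ → Matrix (Fin n) (Fin n) ℝ)
    (hA1 : ∀ i j, ContinuousOn (fun t => A1 t i j) (Set.Icc t0 t1))
    (hA2 : ∀ i j, ContinuousOn (fun t => A2 t i j) (Set.Icc t0 t1))
    (x : ℝ → (Fin n → ℝ))
    (hx : ContDiffOn ℝ 2 x (Set.Icc t0 t1))
    (hode : ∀ t ∈ Set.Icc t0 t1,
      deriv (deriv x) t + A1 t *ᵥ deriv x t + A2 t *ᵥ x t = 0)
    (hbc0 : x t0 = 0) (hbc1 : x t1 = 0)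
    (K0 K0' : ℝ → Matrix (Fin n) (Fin n) ℝ)
    (hK0sym : ∀ t ∈ Set.Icc t0 t1, (K0 t)ᵀ = K0 t)
    (hK0deriv : ∀ t ∈ Set.Icc t0 t1, ∀ i j, HasDerivAt (fun s => K0 s i j) (K0' t i j) t)
    (hK0cont : ∀ i j, ContinuousOn (fun t => K0' t i j) (Set.Icc t0 t1)) :
    ∫ t in t0..t1,
      ((∑ i : Fin n, (deriv x t i - (((1 / 2 : ℝ) • (A1 t)ᵀ - K0 t) *ᵥ x t) i) ^ 2)
        + x t ⬝ᵥ ((K0' t - (1 / 2 : ℝ) • (A2 t + (A2 t)ᵀ)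
            - ((1 / 2 : ℝ) • A1 t - K0 t) * ((1 / 2 : ℝ) • (A1 t)ᵀ - K0 t)) *ᵥ x t)) = 0 := by
  set I := Icc t0 t1
  -- `x` is only `C²` on the closed interval, so the primitive uses the one-sided derivative there
  set y := derivWithin x I
  have hI : ∀ t ∈ Ioo t0 t1, I ∈ 𝓝 t := fun t hto => Icc_mem_nhds hto.1 hto.2
  have hy : EqOn y (deriv x) (Ioo t0 t1) := fun t hto => derivWithin_of_mem_nhds (hI t hto)
  have hxc : ContinuousOn x I := hx.continuousOn
  have hyc : ContinuousOn y I := hx.continuousOn_derivWithin (uniqueDiffOn_Icc ht) one_le_two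
  have hK0c : ContinuousOn K0 I := continuousOn_matrix fun i j t htI =>
    (hK0deriv t htI i j).continuousAt.continuousWithinAt
  have hcont := (continuousOn_matrix hA1).hartmanWintnerIntegrand (continuousOn_matrix hA2) hK0c
    (continuousOn_matrix hK0cont) hxc hyc
  have hderiv : ∀ t ∈ Ioo t0 t1, HasDerivAt (fun s => x s ⬝ᵥ y s + x s ⬝ᵥ (K0 s *ᵥ x s))
      (hartmanWintnerIntegrand (A1 t) (A2 t) (K0 t) (K0' t) (x t) (deriv x t)) t := by
    intro t hto
    have htI := Ioo_subset_Icc_self hto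
    have hxt : HasDerivAt x (y t) t := by
      rw [hy hto]
      exact ((hx.differentiableOn two_ne_zero).differentiableAt (hI t hto)).hasDerivAt
    rw [hartmanWintnerIntegrand_eq (hK0sym t htI) (hode t htI), ← hy hto]
    exact (hxt.dotProduct (hx.hasDerivAt_derivWithin (hI t hto))).add
      (hxt.dotProduct (HasDerivAt.matrix_mulVec (hK0deriv t htI) hxt))
  change ∫ t in t0..t1, hartmanWintnerIntegrand (A1 t) (A2 t) (K0 t) (K0' t) (x t) (deriv x t) = 0
  rw [intervalIntegral.integral_eq_sub_of_hasDerivAt_of_le ht.le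
    ((hxc.dotProduct hyc).add (hxc.dotProduct (hK0c.matrix_mulVec hxc))) hderiv
    ((hcont.intervalIntegrable_of_Icc ht.le).congr_uIoo _)]
  · simp [hbc0, hbc1]
  · rw [uIoo_of_le ht.le]
    intro t hto
    simp only [hy hto]
end

section
/- Let $0<\omega_0<\omega_1<\pi/2$ and let $\mu\in\mathbb{R}$, $\lambda = \mu - i$. Then any $C^2$ function $y:[\omega_0,\omega_1]\to\mathbb{C}$ satisfying $y'' + \cot\theta\, y' + (-\csc^2\theta - \lambda^2 + i\lambda)y = 0$ with $y(\omega_0)=y(\omega_1)=0$ must be identically zero. -/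
/-!
With `v = y / sin θ` the equation becomes `(sin³ θ · v')' = (μ² - 3iμ) sin³ θ · v`, so the real
part of `sin³ θ · v' · conj v = (sin θ · y' - cos θ · y) · conj y` has derivative
`sin³ θ · (|v'|² + μ² |v|²) ≥ 0`. It vanishes at both endpoints, hence is constant, so `v' = 0`
on `(ω₀, ω₁)` and `v` is identically its value `0` at `ω₁`.
-/

open Set Complex ComplexConjugate

theorem eq_zero_of_hasDerivAt_nonneg_of_eq {f g : ℝ → ℝ} {a b : ℝ}
    (hf : ContinuousOn f (Icc a b)) (hderiv : ∀ x ∈ Ioo a b, HasDerivAt f (g x) x)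
    (hg : ∀ x ∈ Ioo a b, 0 ≤ g x) (hab : f a = f b) : ∀ x ∈ Ioo a b, g x = 0 := by
  intro x hx
  have hmono : MonotoneOn f (Icc a b) :=
    monotoneOn_of_hasDerivWithinAt_nonneg (convex_Icc a b) hf
      (by simpa only [interior_Icc] using fun t ht => (hderiv t ht).hasDerivWithinAt)
      (by simpa only [interior_Icc] using hg)
  have hconst : ∀ t ∈ Icc a b, f t = f a := fun t ht => le_antisymm
    (hab ▸ hmono ht (right_mem_Icc.2 (ht.1.trans ht.2)) ht.2)
    (hmono (left_mem_Icc.2 (ht.1.trans ht.2)) ht ht.1)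
  have hzero : HasDerivAt f 0 x :=
    (hasDerivAt_const x (f a)).congr_of_eventuallyEq
      (Filter.eventually_of_mem (Icc_mem_nhds hx.1 hx.2) hconst)
  exact (hderiv x hx).unique hzero

theorem eq_of_hasDerivAt_zero {E : Type*} [NormedAddCommGroup E] [NormedSpace ℝ E]
    {f : ℝ → E} {a b : ℝ} (hf : ContinuousOn f (Ioc a b))
    (hderiv : ∀ x ∈ Ioo a b, HasDerivAt f 0 x) : ∀ x ∈ Ioc a b, f x = f b := fun _ hx =>
  (constant_of_has_deriv_right_zero (hf.mono (Icc_subset_Ioc_iff hx.2 |>.2 ⟨hx.1, le_rfl⟩))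
    (fun t ht => (hderiv t ⟨hx.1.trans_le ht.1, ht.2⟩).hasDerivWithinAt)
    b (right_mem_Icc.2 hx.2)).symm

theorem ContDiffOn.hasDerivAt_derivWithin_Icc {E : Type*} [NormedAddCommGroup E] [NormedSpace ℝ E]
    {y : ℝ → E} {a b x : ℝ} (hy : ContDiffOn ℝ 2 y (Icc a b)) (hx : x ∈ Ioo a b) :
    HasDerivAt y (derivWithin y (Icc a b) x) x ∧
      HasDerivAt (derivWithin y (Icc a b)) (deriv (deriv y) x) x := by
  have hderiv_eq : derivWithin y (Icc a b) =ᶠ[nhds x] deriv y :=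
    Filter.eventually_of_mem (isOpen_Ioo.mem_nhds hx) fun t ht =>
      derivWithin_of_mem_nhds (Icc_mem_nhds ht.1 ht.2)
  have hyx : ContDiffAt ℝ 2 y x := hy.contDiffAt (Icc_mem_nhds hx.1 hx.2)
  have hy'x : ContDiffAt ℝ 1 (deriv y) x := by
    simpa only [derivWithin_univ] using hyx.derivWithin (m := 1) (by norm_num)
  exact ⟨hderiv_eq.eq_of_nhds ▸ (hyx.differentiableAt two_ne_zero).hasDerivAt,
    ((hy'x.differentiableAt one_ne_zero).hasDerivAt).congr_of_eventuallyEq hderiv_eq⟩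

theorem re_energy_deriv_eq (μ s c : ℝ) (hs : s ≠ 0) (hsc : s ^ 2 + c ^ 2 = 1) {y y' y'' : ℂ}
    (hode : y'' + ((c / s : ℝ) : ℂ) * y' +
      (((-(1 / s) ^ 2 : ℝ) : ℂ) - (μ - I) ^ 2 + I * (μ - I)) * y = 0) :
    ((c * y' + s * y'' - (-s * y + c * y')) * conj y + (s * y' - c * y) * conj y').re
      = s * (normSq (y' - (c / s : ℝ) * y) + μ ^ 2 * normSq y) := by
  have hsC : (s : ℂ) ≠ 0 := ofReal_ne_zero.2 hs
  have hscC : (s : ℂ) ^ 2 + (c : ℂ) ^ 2 = 1 := by exact_mod_cast hsc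
  have key : (c * y' + s * y'' - (-s * y + c * y')) * conj y + (s * y' - c * y) * conj y'
      = s * ((y' - (c / s : ℝ) * y) * conj (y' - (c / s : ℝ) * y))
        + (μ ^ 2 - 3 * I * μ) * (s * (y * conj y)) := by
    simp only [map_sub, map_mul, conj_ofReal]
    push_cast at hode ⊢
    -- `-(μ - i)² + i(μ - i) = 2 - μ² + 3iμ` and `c² / s = 1 / s - s`
    linear_combination (norm := skip) s * conj y * hode - y * conj y / s * hscC
      + 2 * s * y * conj y * I_sq
    field_simp
    ring
  rw [key, mul_conj, mul_conj]
  simp only [add_re, mul_re, sub_re, sub_im, mul_im, ofReal_re, ofReal_im, I_re, I_im, pow_two,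
    re_ofNat, im_ofNat]
  ring

noncomputable def energy (y y' : ℝ → ℂ) (θ : ℝ) : ℝ :=
  ((Real.sin θ * y' θ - Real.cos θ * y θ) * conj (y θ)).re

theorem hasDerivAt_energy {μ θ : ℝ} {y y' : ℝ → ℂ} {y'' : ℂ} (hs : Real.sin θ ≠ 0)
    (hy : HasDerivAt y (y' θ) θ) (hy' : HasDerivAt y' y'' θ)
    (hode : y'' + ((Real.cos θ / Real.sin θ : ℝ) : ℂ) * y' θ +
      (((-(1 / Real.sin θ) ^ 2 : ℝ) : ℂ) - (μ - I) ^ 2 + I * (μ - I)) * y θ = 0) :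
    HasDerivAt (energy y y')
      (Real.sin θ * (normSq (y' θ - ((Real.cos θ / Real.sin θ : ℝ) : ℂ) * y θ)
        + μ ^ 2 * normSq (y θ))) θ := by
  rw [← re_energy_deriv_eq μ _ _ hs (Real.sin_sq_add_cos_sq θ) hode]
  have hconj : HasDerivAt (fun t => conj (y t)) (conj (y' θ)) θ := hy.star
  exact (reCLM.hasFDerivAt.comp_hasDerivAt θ
    ((((Real.hasDerivAt_sin θ).ofReal_comp.mul hy').sub
      ((Real.hasDerivAt_cos θ).ofReal_comp.mul hy)).mul hconj)).congr_deriv (by simp)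

theorem hasDerivAt_cot_mul_of_ode {μ a b : ℝ} {y y' y'' : ℝ → ℂ}
    (hsin : ∀ θ ∈ Ioo a b, 0 < Real.sin θ) (hy : ContinuousOn y (Icc a b))
    (hy' : ContinuousOn y' (Icc a b)) (hderiv : ∀ θ ∈ Ioo a b, HasDerivAt y (y' θ) θ)
    (hderiv' : ∀ θ ∈ Ioo a b, HasDerivAt y' (y'' θ) θ)
    (hode : ∀ θ ∈ Ioo a b, y'' θ + ((Real.cos θ / Real.sin θ : ℝ) : ℂ) * y' θ +
      (((-(1 / Real.sin θ) ^ 2 : ℝ) : ℂ) - (μ - I) ^ 2 + I * (μ - I)) * y θ = 0)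
    (ha : y a = 0) (hb : y b = 0) :
    ∀ θ ∈ Ioo a b, HasDerivAt y (((Real.cos θ / Real.sin θ : ℝ) : ℂ) * y θ) θ := by
  have henergy : ContinuousOn (energy y y') (Icc a b) := by
    unfold energy
    fun_prop
  have hdissipation := eq_zero_of_hasDerivAt_nonneg_of_eq henergy
    (fun θ hθ => hasDerivAt_energy (hsin θ hθ).ne' (hderiv θ hθ) (hderiv' θ hθ) (hode θ hθ))
    (fun θ hθ => mul_nonneg (hsin θ hθ).le
      (add_nonneg (normSq_nonneg _) (mul_nonneg (sq_nonneg μ) (normSq_nonneg _))))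
    (by simp [energy, ha, hb])
  intro θ hθ
  have h := hdissipation θ hθ
  rw [mul_eq_zero, or_iff_right (hsin θ hθ).ne', add_eq_zero_iff_of_nonneg (normSq_nonneg _)
    (mul_nonneg (sq_nonneg μ) (normSq_nonneg _)), normSq_eq_zero, sub_eq_zero] at h
  exact h.1 ▸ hderiv θ hθ

theorem eq_zero_of_hasDerivAt_cot_mul {y : ℝ → ℂ} {a b : ℝ}
    (hsin : ∀ θ ∈ Ioc a b, Real.sin θ ≠ 0) (hy : ContinuousOn y (Ioc a b))
    (hderiv : ∀ θ ∈ Ioo a b, HasDerivAt y (((Real.cos θ / Real.sin θ : ℝ) : ℂ) * y θ) θ)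
    (hb : y b = 0) : ∀ θ ∈ Ioc a b, y θ = 0 := by
  have hsinC : ∀ θ ∈ Ioc a b, (Real.sin θ : ℂ) ≠ 0 := fun θ hθ => ofReal_ne_zero.2 (hsin θ hθ)
  set v : ℝ → ℂ := fun θ => y θ / Real.sin θ
  have hv : ContinuousOn v (Ioc a b) :=
    hy.div (continuous_ofReal.comp Real.continuous_sin).continuousOn hsinC
  have hv' : ∀ θ ∈ Ioo a b, HasDerivAt v 0 θ := fun θ hθ => by
    have hs := hsinC θ (Ioo_subset_Ioc_self hθ)
    refine ((hderiv θ hθ).div (Real.hasDerivAt_sin θ).ofReal_comp hs).congr_deriv ?_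
    rw [ofReal_div]
    field_simp
    ring
  intro θ hθ
  have hvθ : v θ = 0 := by
    rw [eq_of_hasDerivAt_zero hv hv' θ hθ]
    simp [v, hb]
  exact (div_eq_zero_iff.1 hvθ).resolve_right (hsinC θ hθ)

/-- Uniqueness for the Fourier-transformed singular ODE with complex spectral parameter
`λ = μ - i`: any `C²` solution of `y'' + cot θ · y' + (-csc²θ - λ² + iλ)y = 0` on
`[ω₀,ω₁] ⊂ (0, π/2)` vanishing at both endpoints is identically zero. -/
theorem stmt_5 (ω0 ω1 μ : ℝ) (h0 : 0 < ω0) (h01 : ω0 < ω1) (h1 : ω1 < Real.pi / 2)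
    (y : ℝ → ℂ) (hy : ContDiffOn ℝ 2 y (Set.Icc ω0 ω1))
    (hode : ∀ θ ∈ Set.Icc ω0 ω1,
      deriv (deriv y) θ + ((Real.cos θ / Real.sin θ : ℝ) : ℂ) * deriv y θ +
        (((-(1 / Real.sin θ) ^ 2 : ℝ) : ℂ) - ((μ : ℂ) - Complex.I) ^ 2
          + Complex.I * ((μ : ℂ) - Complex.I)) * y θ = 0)
    (hbc0 : y ω0 = 0) (hbc1 : y ω1 = 0) :
    ∀ θ ∈ Set.Icc ω0 ω1, y θ = 0 := by
  have hsin : ∀ θ ∈ Icc ω0 ω1, 0 < Real.sin θ := fun θ hθ =>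
    Real.sin_pos_of_pos_of_lt_pi (h0.trans_le hθ.1)
      (hθ.2.trans_lt (h1.trans (half_lt_self Real.pi_pos)))
  set y' := derivWithin y (Icc ω0 ω1)
  have hderivs : ∀ θ ∈ Ioo ω0 ω1,
      HasDerivAt y (y' θ) θ ∧ HasDerivAt y' (deriv (deriv y) θ) θ :=
    fun θ hθ => hy.hasDerivAt_derivWithin_Icc hθ
  have hcot := hasDerivAt_cot_mul_of_ode (fun θ hθ => hsin θ (Ioo_subset_Icc_self hθ))
    hy.continuousOn (hy.continuousOn_derivWithin (uniqueDiffOn_Icc h01) one_le_two)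
    (fun θ hθ => (hderivs θ hθ).1) (fun θ hθ => (hderivs θ hθ).2)
    (fun θ hθ => (hderivs θ hθ).1.deriv ▸ hode θ (Ioo_subset_Icc_self hθ)) hbc0 hbc1
  intro θ hθ
  rcases hθ.1.eq_or_lt with rfl | hθ0
  · exact hbc0
  · exact eq_zero_of_hasDerivAt_cot_mul (fun t ht => (hsin t (Ioc_subset_Icc_self ht)).ne')
      (hy.continuousOn.mono Ioc_subset_Icc_self) hcot hbc1 θ ⟨hθ0, hθ.2⟩
end
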